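/- Let ℓ ≥ 2 with 2ℓ < n - 4. If the q-ary NMDS linear code C = [n, n-2ℓ-2, 2ℓ+2] has an ℓ-error-correcting pair (A, B) over F_{q^m} with A = [n, ℓ+2, n-ℓ-1], then exactly one of the following holds: (1) B^⊥ = [n, n-ℓ-1, ℓ+1]; (2) B^⊥ = [n, n-ℓ, ℓ+1] and A*B = [n, 2ℓ+1, n-2ℓ]; (3) B^⊥ = [n, n-ℓ, ℓ+1] and A*B = C^⊥. -/

import Mathlib

open Finset

/-- Hamming weight of a vector. -/
noncomputable def wt {F : Type*} [Zero F] {ι : Type*} (c : ι → F) : ℕ :=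
  Nat.card {i : ι // c i ≠ 0}

/-- `C` has minimum Hamming distance `d`. -/
def hasMinDist {F : Type*} [Field F] {ι : Type*} (C : Submodule F (ι → F)) (d : ℕ) : Prop :=
  (∃ c ∈ C, c ≠ 0 ∧ wt c = d) ∧ ∀ c ∈ C, c ≠ 0 → d ≤ wt c

/-- The dual code with respect to the standard inner product. -/
def dualCode {F : Type*} [Field F] {ι : Type*} [Fintype ι] (C : Submodule F (ι → F)) :
    Submodule F (ι → F) where
  carrier := {x | ∀ c ∈ C, ∑ i, x i * c i = 0}
  add_mem' := by
    intro a b ha hb c hc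
    simp only [Pi.add_apply, add_mul, Finset.sum_add_distrib, ha c hc, hb c hc, add_zero]
  zero_mem' := by intro c hc; simp
  smul_mem' := by
    intro r a ha c hc
    simp only [Pi.smul_apply, smul_eq_mul, mul_assoc, ← Finset.mul_sum, ha c hc, mul_zero]

/-- The Schur (coordinatewise) product code: the span of all coordinatewise products. -/
def schurProd {F : Type*} [Field F] {ι : Type*} (A B : Submodule F (ι → F)) :
    Submodule F (ι → F) :=
  Submodule.span F {x | ∃ a ∈ A, ∃ b ∈ B, x = a * b}

/-- A code is full-support if every coordinate carries a nonzero entry of some codeword. -/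
def fullSupport {F : Type*} [Field F] {ι : Type*} (A : Submodule F (ι → F)) : Prop :=
  ∀ i : ι, ∃ a ∈ A, a i ≠ 0

/-- Extension of scalars of a code from `Fq` to an extension field `K`, componentwise. -/
def extendCode (Fq K : Type*) [Field Fq] [Field K] [Algebra Fq K] {ι : Type*}
    (C : Submodule Fq (ι → Fq)) : Submodule K (ι → K) :=
  Submodule.span K ((fun c (i : ι) => algebraMap Fq K (c i)) '' (C : Set (ι → Fq)))


/-!
Since `A` is MDS of dimension `ℓ + 2`, every `ℓ + 1` coordinates form the exact zero set of a word
of `A`, and `d(B^⊥) > ℓ` means that `B` takes arbitrary values on any `ℓ` coordinates, so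
`dim B ≥ ℓ`. Let `u` be a word of `C` of weight `2ℓ + 2`. For `b ∈ B` the words `u * b` lie in
`A^⊥`, whose minimum distance is `ℓ + 3`, and are supported on `supp u`; moreover `b ↦ u * b` is
injective on `B`, since a nonzero `b` vanishing on `supp u` could be multiplied by a word of `A`
into a nonzero word of `A * B ⊆ C^⊥` of weight below `d(C^⊥)`. The Singleton bound on `supp u`
gives `dim B ≤ ℓ`. Hence `B` is MDS of dimension `ℓ`, and `B^⊥ = [n, n - ℓ, ℓ + 1]`.
Multiplying words of `A` and `B` with prescribed zero sets, every `2ℓ` coordinates form the exact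
zero set of a word of `A * B`, so `A * B` has strength `2ℓ + 1`; inside `C^⊥` of dimension
`2ℓ + 2` it is either MDS of dimension `2ℓ + 1` or all of `C^⊥`.
-/

open Module

section Weight

variable {F ι : Type*} [Fintype ι]

theorem wt_eq_hammingNorm [Zero F] [DecidableEq F] (x : ι → F) : wt x = hammingNorm x := by
  rw [wt, Nat.card_eq_fintype_card, Fintype.card_subtype, hammingNorm]

theorem wt_pos [Zero F] {x : ι → F} (hx : x ≠ 0) : 0 < wt x := by
  classical
  exact (wt_eq_hammingNorm x).symm ▸ hammingNorm_pos_iff.2 hx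

theorem wt_add_card_eq [Zero F] {x : ι → F} {S : Finset ι} (hS : ∀ i, x i = 0 ↔ i ∈ S) :
    wt x + #S = Fintype.card ι := by
  classical
  have hS' : S = ({i | x i = 0} : Finset ι) := by ext i; simp [hS]
  rw [wt_eq_hammingNorm, hammingNorm, hS', add_comm, ← card_univ]
  exact card_filter_add_card_filter_not _

theorem card_add_wt_le [Zero F] {x : ι → F} {T : Finset ι} (hT : ∀ i ∈ T, x i = 0) :
    #T + wt x ≤ Fintype.card ι := by
  classical
  have hTZ : T ⊆ ({i | x i = 0} : Finset ι) := fun i hi => mem_filter.2 ⟨mem_univ i, hT i hi⟩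
  have := wt_add_card_eq (x := x) (S := {i | x i = 0}) (by simp)
  have := card_le_card hTZ
  omega

theorem wt_le_card [Zero F] {x : ι → F} {T : Finset ι} (hT : ∀ i ∉ T, x i = 0) : wt x ≤ #T := by
  classical
  rw [wt_eq_hammingNorm]
  exact card_le_card fun i hi => by_contra fun h => (mem_filter.1 hi).2 (hT i h)

theorem wt_comp_le {G : Type*} [Zero F] [Zero G] (f : F → G) (hf : f 0 = 0) (x : ι → F) :
    wt (fun i => f (x i)) ≤ wt x := by
  classical
  simpa only [wt_eq_hammingNorm] using hammingNorm_comp_le_hammingNorm (fun _ => f) (fun _ => hf)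

theorem wt_comp {G : Type*} [Zero F] [Zero G] {f : F → G} (hf : Function.Injective f)
    (hf0 : f 0 = 0) (x : ι → F) : wt (fun i => f (x i)) = wt x := by
  classical
  simpa only [wt_eq_hammingNorm] using hammingNorm_comp (fun _ => f) (fun _ => hf) (fun _ => hf0)

theorem wt_mul_lt [MulZeroClass F] {a b : ι → F} {q : ι} (ha : a q = 0) (hb : b q ≠ 0) :
    wt (a * b) < wt b := by
  classical
  simp only [wt_eq_hammingNorm, hammingNorm]
  refine card_lt_card ((ssubset_iff_of_subset fun i hi => ?_).2 ⟨q, by simpa using hb, ?_⟩)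
  · simp only [mem_filter, mem_univ, true_and, Pi.mul_apply] at hi ⊢
    exact right_ne_zero_of_mul hi
  · simp [ha]

end Weight

section LinearCode

variable {K ι : Type*} [Field K]

def coordRestrict (S : Finset ι) : (ι → K) →ₗ[K] (S → K) := LinearMap.funLeft K K (↑)

@[simp]
theorem coordRestrict_apply (S : Finset ι) (x : ι → K) (i : S) : coordRestrict S x i = x i := rfl

variable [Fintype ι]

theorem finrank_dualCode_add (C : Submodule K (ι → K)) :
    finrank K (dualCode C) + finrank K C = Fintype.card ι := by
  classical
  have h : dualCode C = C.dualAnnihilator.comap (dotProductEquiv K ι).toLinearMap := by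
    ext x
    simp [dualCode, Submodule.mem_dualAnnihilator, dotProduct]
  rw [h, Submodule.comap_equiv_eq_map_symm, LinearEquiv.finrank_map_eq, add_comm,
    Subspace.finrank_add_finrank_dualAnnihilator_eq, finrank_fintype_fun_eq_card]

theorem exists_ne_zero_forall_eq_zero (X : Submodule K (ι → K)) {S : Finset ι}
    (hS : #S < finrank K X) : ∃ x ∈ X, x ≠ 0 ∧ ∀ i ∈ S, x i = 0 := by
  have hker : LinearMap.ker ((coordRestrict S).domRestrict X) ≠ ⊥ :=
    LinearMap.ker_ne_bot_of_finrank_lt (by simpa using hS)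
  obtain ⟨⟨x, hx⟩, hxker, hx0⟩ := Submodule.exists_mem_ne_zero_of_ne_bot hker
  exact ⟨x, hx, by simpa using hx0, fun i hi => congr_fun (LinearMap.mem_ker.1 hxker) ⟨i, hi⟩⟩

theorem singleton_bound {X : Submodule K (ι → K)} {W : Finset ι} {d : ℕ}
    (hW : ∀ x ∈ X, ∀ i ∉ W, x i = 0) (hd : ∀ x ∈ X, x ≠ 0 → d ≤ wt x)
    (hX : 0 < finrank K X) : finrank K X + d ≤ #W + 1 := by
  classical
  obtain ⟨S, hSW, hS⟩ := exists_subset_card_eq (min_le_right (finrank K X - 1) #W)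
  obtain ⟨x, hx, hx0, hxS⟩ := exists_ne_zero_forall_eq_zero X (S := S) (by omega)
  have hwt : wt x ≤ #(W \ S) := wt_le_card fun i hi => by
    by_cases hiW : i ∈ W
    · exact hxS i (by simpa [hiW] using hi)
    · exact hW x hx i hiW
  rw [card_sdiff_of_subset hSW] at hwt
  have := hd x hx hx0
  have := wt_pos hx0
  omega

end LinearCode

section Strength

variable {K ι : Type*} [Field K]

/-- `X` is an orthogonal array of strength `k`. -/
def HasStrength (X : Submodule K (ι → K)) (k : ℕ) : Prop :=
  ∀ S : Finset ι, #S ≤ k → ∀ g : ι → K, ∃ x ∈ X, ∀ i ∈ S, x i = g i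

variable {X : Submodule K (ι → K)} {k : ℕ}

theorem HasStrength.mono (h : HasStrength X k) {j : ℕ} (hjk : j ≤ k) : HasStrength X j :=
  fun S hS => h S (hS.trans hjk)

theorem HasStrength.map_coordRestrict_eq_top (h : HasStrength X k) {S : Finset ι} (hS : #S ≤ k) :
    X.map (coordRestrict S) = ⊤ := by
  classical
  refine eq_top_iff.2 fun g _ => ?_
  obtain ⟨x, hx, hxg⟩ := h S hS fun i => if hi : i ∈ S then g ⟨i, hi⟩ else 0
  exact ⟨x, hx, funext fun i => by simp [hxg i i.2]⟩

variable [Fintype ι]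

theorem HasStrength.le_finrank (h : HasStrength X k) (hk : k ≤ Fintype.card ι) :
    k ≤ finrank K X := by
  obtain ⟨S, -, hS⟩ := exists_subset_card_eq (s := (univ : Finset ι)) (by simpa using hk)
  have := Submodule.finrank_map_le (coordRestrict S) X
  rwa [h.map_coordRestrict_eq_top hS.le, finrank_top, finrank_fintype_fun_eq_card,
    Fintype.card_coe, hS] at this

theorem HasStrength.lt_wt_add (h : HasStrength X k) (hX : finrank K X ≤ k) {x : ι → K}
    (hx : x ∈ X) (hx0 : x ≠ 0) : Fintype.card ι < wt x + k := by
  classical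
  by_contra! hle
  have hzeros := wt_add_card_eq (x := x) (S := {i | x i = 0}) (by simp)
  obtain ⟨T, hT, hTk⟩ := exists_subset_card_eq (s := ({i | x i = 0} : Finset ι)) (n := k)
    (by omega)
  set f := (coordRestrict T).domRestrict X
  have hrange : LinearMap.range f = ⊤ := by
    rw [LinearMap.range_domRestrict]
    exact h.map_coordRestrict_eq_top hTk.le
  have hker : LinearMap.ker f = ⊥ := by
    have := LinearMap.finrank_range_add_finrank_ker f
    rw [hrange, finrank_top, finrank_fintype_fun_eq_card, Fintype.card_coe, hTk] at this
    exact Submodule.finrank_eq_zero.1 (by omega)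
  have hxker : (⟨x, hx⟩ : X) ∈ LinearMap.ker f :=
    LinearMap.mem_ker.2 <| funext fun i => by simpa [f] using (mem_filter.1 (hT i.2)).2
  rw [hker, Submodule.mem_bot] at hxker
  exact hx0 (congr_arg Subtype.val hxker)

theorem HasStrength.lt_wt_of_mem_dualCode (h : HasStrength X k) {y : ι → K}
    (hy : y ∈ dualCode X) (hy0 : y ≠ 0) : k < wt y := by
  classical
  by_contra! hle
  obtain ⟨i₀, hi₀⟩ := Function.ne_iff.1 hy0
  obtain ⟨x, hx, hxg⟩ := h {i | y i ≠ 0} (by rwa [← hammingNorm, ← wt_eq_hammingNorm])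
    (Pi.single i₀ 1)
  have hsum : ∑ i, y i * x i = y i₀ := by
    rw [sum_eq_single i₀]
    · simp [hxg i₀ (by simpa using hi₀)]
    · intro i _ hi
      by_cases hyi : y i = 0
      · simp [hyi]
      · simp [hxg i (by simpa using hyi), hi]
    · simp
  exact hi₀ (hsum ▸ hy x hx)

theorem hasStrength_of_lt_wt_dualCode (h : ∀ y ∈ dualCode X, y ≠ 0 → k < wt y) :
    HasStrength X k := by
  classical
  intro S hS g
  suffices hS : X.map (coordRestrict S) = ⊤ by
    obtain ⟨x, hx, hxg⟩ := hS.ge (Submodule.mem_top (x := coordRestrict S g))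
    exact ⟨x, hx, fun i hi => congr_fun hxg ⟨i, hi⟩⟩
  by_contra hne
  -- a nonzero word orthogonal to the restriction of `X` to `S`, extended by zero, is a word
  -- of the dual of `X` of weight at most `#S`
  have hlt := Submodule.finrank_lt hne
  have hdim := finrank_dualCode_add (X.map (coordRestrict S))
  rw [finrank_fintype_fun_eq_card, Fintype.card_coe] at hlt
  rw [Fintype.card_coe] at hdim
  obtain ⟨z, hz, hz0⟩ := Submodule.exists_mem_ne_zero_of_ne_bot
    (p := dualCode (X.map (coordRestrict S))) fun hbot => by
    rw [hbot, finrank_bot] at hdim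
    omega
  set y : ι → K := fun i => if hi : i ∈ S then z ⟨i, hi⟩ else 0
  have hyX : y ∈ dualCode X := fun x hx => by
    rw [← hz _ (Submodule.mem_map_of_mem hx), ← sum_subset (subset_univ S) fun i _ hi => by
      simp [y, hi], ← sum_coe_sort]
    simp [y]
  have hy0 : y ≠ 0 := fun hy => hz0 <| funext fun i => by simpa [y] using congr_fun hy i
  have := h y hyX hy0
  have := wt_le_card (x := y) (T := S) fun i hi => by simp [y, hi]
  omega

end Strength

section ZeroSets

variable {K ι : Type*} [Field K]

def RealizesZeroSets (X : Submodule K (ι → K)) (k : ℕ) : Prop :=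
  ∀ S : Finset ι, #S = k → ∃ x ∈ X, ∀ i, x i = 0 ↔ i ∈ S

theorem mul_mem_schurProd {A B : Submodule K (ι → K)} {a b : ι → K} (ha : a ∈ A) (hb : b ∈ B) :
    a * b ∈ schurProd A B :=
  Submodule.subset_span ⟨a, ha, b, hb, rfl⟩

theorem RealizesZeroSets.schurProd {A B : Submodule K (ι → K)} {s t : ℕ}
    (hA : RealizesZeroSets A s) (hB : RealizesZeroSets B t) :
    RealizesZeroSets (schurProd A B) (s + t) := by
  classical
  intro U hU
  obtain ⟨S, hSU, hS⟩ := exists_subset_card_eq (show s ≤ #U by omega)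
  obtain ⟨a, ha, haS⟩ := hA S hS
  obtain ⟨b, hb, hbT⟩ := hB (U \ S) (by rw [card_sdiff_of_subset hSU]; omega)
  refine ⟨a * b, mul_mem_schurProd ha hb, fun i => ?_⟩
  simp only [Pi.mul_apply, mul_eq_zero, haS, hbT, mem_sdiff]
  by_cases hiS : i ∈ S
  · simp [hiS, hSU hiS]
  · simp [hiS]

variable [Fintype ι] {X : Submodule K (ι → K)} {k : ℕ}

theorem realizesZeroSets_of_finrank_eq (hX : finrank K X = k + 1)
    (hd : ∀ x ∈ X, x ≠ 0 → Fintype.card ι ≤ wt x + k) : RealizesZeroSets X k := by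
  classical
  intro S hS
  obtain ⟨x, hx, hx0, hxS⟩ := exists_ne_zero_forall_eq_zero X (S := S) (by omega)
  have hzeros := wt_add_card_eq (x := x) (S := {i | x i = 0}) (by simp)
  have hSZ : S = ({i | x i = 0} : Finset ι) :=
    eq_of_subset_of_card_le (fun i hi => by simpa using hxS i hi) (by have := hd x hx hx0; omega)
  exact ⟨x, hx, fun i => by simp [hSZ]⟩

theorem RealizesZeroSets.hasStrength (h : RealizesZeroSets X k) (hk : k < Fintype.card ι) :
    HasStrength X (k + 1) := by
  classical
  intro S hS g
  obtain ⟨U, hSU, -, hU⟩ := exists_subsuperset_card_eq (subset_univ S) hS (by simpa using hk)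
  -- interpolate with the codewords whose zero sets are `U` minus one point
  choose x hxX hx using fun p : U => h (U.erase p) (by rw [card_erase_of_mem p.2, hU]; rfl)
  refine ⟨∑ p : U, (g p / x p p) • x p, sum_mem fun p _ => Submodule.smul_mem _ _ (hxX p),
    fun i hi => ?_⟩
  have hiU := hSU hi
  rw [Finset.sum_apply, sum_eq_single ⟨i, hiU⟩]
  · have : x ⟨i, hiU⟩ i ≠ 0 := by simp [hx]
    simp [div_mul_cancel₀ _ this]
  · intro p _ hp
    have : x p i = 0 := (hx p i).2 (mem_erase.2 ⟨fun h => hp (Subtype.ext h.symm), hiU⟩)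
    simp [this]
  · simp

theorem HasStrength.realizesZeroSets (h : HasStrength X (k + 1)) (hX : finrank K X = k + 1) :
    RealizesZeroSets X k :=
  realizesZeroSets_of_finrank_eq hX fun x hx hx0 => by
    have := h.lt_wt_add hX.le hx hx0
    omega

theorem RealizesZeroSets.finrank_eq_and_hasMinDist_or_eq {P D : Submodule K (ι → K)}
    (hP : RealizesZeroSets P k) (hk : k < Fintype.card ι) (hPD : P ≤ D)
    (hD : finrank K D = k + 2) :
    (finrank K P = k + 1 ∧ hasMinDist P (Fintype.card ι - k)) ∨ P = D := by
  have hPstr := hP.hasStrength hk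
  have hge := hPstr.le_finrank hk
  rcases (Submodule.finrank_mono hPD).lt_or_eq with hlt | heq
  · have hrank : finrank K P = k + 1 := by omega
    refine Or.inl ⟨hrank, ?_, fun x hx hx0 => ?_⟩
    · obtain ⟨S, -, hS⟩ := exists_subset_card_eq (s := (univ : Finset ι)) (by simpa using hk.le)
      obtain ⟨x, hx, hxS⟩ := hP S hS
      have hwt := wt_add_card_eq hxS
      exact ⟨x, hx, fun h0 => by simp [h0, wt] at hwt; omega, by omega⟩
    · have := hPstr.lt_wt_add hrank.le hx hx0
      omega
  · exact Or.inr (Submodule.eq_of_le_of_finrank_eq hPD heq)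

end ZeroSets

section ErrorCorrectingPair

variable {K ι : Type*} [Field K] [Fintype ι] {A B : Submodule K (ι → K)}

theorem mul_mem_dualCode_of_schurProd_le_dualCode {E : Submodule K (ι → K)}
    (hAB : schurProd A B ≤ dualCode E) {u b : ι → K} (hu : u ∈ E) (hb : b ∈ B) :
    u * b ∈ dualCode A := fun a ha => by
  rw [← hAB (mul_mem_schurProd ha hb) u hu]
  exact sum_congr rfl fun i _ => by simp only [Pi.mul_apply]; ring

theorem eq_zero_of_forall_mem_eq_zero_of_schurProd_le {D : Submodule K (ι → K)} {δ : ℕ}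
    {W : Finset ι} (hA : HasStrength A 2) (hAB : schurProd A B ≤ D)
    (hD : ∀ x ∈ D, x ≠ 0 → δ ≤ wt x) (hδ : 2 ≤ δ) (hW : Fintype.card ι ≤ #W + δ)
    {b : ι → K} (hb : b ∈ B) (hbW : ∀ i ∈ W, b i = 0) : b = 0 := by
  classical
  by_contra hb0
  obtain ⟨p, hp⟩ := Function.ne_iff.1 hb0
  have hwt := card_add_wt_le hbW
  -- kill a second coordinate of `b` if there is one, keeping `p`
  obtain ⟨a, ha, hap, hlt⟩ : ∃ a ∈ A, a p ≠ 0 ∧ wt (a * b) < δ := by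
    by_cases hq : ∃ q, q ≠ p ∧ b q ≠ 0
    · obtain ⟨q, hqp, hq⟩ := hq
      obtain ⟨a, ha, hag⟩ := hA {p, q} card_le_two (Pi.single p 1)
      refine ⟨a, ha, by simp [hag p], (wt_mul_lt (q := q) ?_ hq).trans_le (by omega)⟩
      simp [hag q, hqp]
    · push Not at hq
      obtain ⟨a, ha, hag⟩ := hA {p} (by simp) (Pi.single p 1)
      refine ⟨a, ha, by simp [hag p], (wt_le_card (T := {p}) fun i hi => ?_).trans_lt ?_⟩
      · simp [hq i (by simpa using hi)]
      · simp only [card_singleton]; omega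
  exact not_le.2 hlt <| hD _ (hAB (mul_mem_schurProd ha hb))
    fun h => mul_ne_zero hap hp (congr_fun h p)

theorem finrank_le_wt_sub_of_mul_mem_dualCode {u : ι → K} {s : ℕ}
    (huB : ∀ b ∈ B, u * b ∈ dualCode A) (hA : ∀ y ∈ dualCode A, y ≠ 0 → s < wt y)
    (hB : ∀ b ∈ B, (∀ i, u i ≠ 0 → b i = 0) → b = 0) : finrank K B ≤ wt u - s := by
  classical
  rcases (finrank K B).eq_zero_or_pos with h0 | hpos
  · simp [h0]
  set f := LinearMap.mulLeft K u
  have hinj : Function.Injective (f ∘ₗ B.subtype) := by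
    refine (injective_iff_map_eq_zero _).2 fun b hb => Subtype.ext <| hB b b.2 fun i hi => ?_
    simpa [f, hi] using congr_fun hb i
  have hrank : finrank K B = finrank K (B.map f) := by
    rw [← LinearMap.finrank_range_of_inj hinj, LinearMap.range_comp, Submodule.range_subtype]
  have := singleton_bound (X := B.map f) (W := {i | u i ≠ 0}) (d := s + 1)
    (by
      rintro _ ⟨b, -, rfl⟩ i hi
      simp [f, show u i = 0 by simpa using hi])
    (by rintro _ ⟨b, hb, rfl⟩ hb0; exact hA _ (huB b hb) hb0) (hrank ▸ hpos)
  rw [← hammingNorm, ← wt_eq_hammingNorm] at this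
  omega

theorem finrank_le_wt_sub_of_schurProd_le_dualCode {E : Submodule K (ι → K)} {s δ : ℕ}
    (hA : HasStrength A s) (hs : 2 ≤ s) (hAB : schurProd A B ≤ dualCode E)
    (hE : ∀ x ∈ dualCode E, x ≠ 0 → δ ≤ wt x) (hδ : 2 ≤ δ) {u : ι → K} (hu : u ∈ E)
    (huδ : Fintype.card ι ≤ wt u + δ) : finrank K B ≤ wt u - s := by
  classical
  refine finrank_le_wt_sub_of_mul_mem_dualCode
    (fun b hb => mul_mem_dualCode_of_schurProd_le_dualCode hAB hu hb)
    (fun y => hA.lt_wt_of_mem_dualCode) fun b hb hbu => ?_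
  refine eq_zero_of_forall_mem_eq_zero_of_schurProd_le (W := {i | u i ≠ 0}) (hA.mono hs) hAB hE
    hδ ?_ hb (by simpa using hbu)
  rwa [← hammingNorm, ← wt_eq_hammingNorm]

end ErrorCorrectingPair

section ExtendCode

variable {Fq K ι : Type*} [Field Fq] [Field K] [Algebra Fq K] [Fintype ι]

theorem finrank_extendCode (C : Submodule Fq (ι → Fq)) :
    finrank K (extendCode Fq K C) = finrank Fq C := by
  let b := Module.finBasis Fq C
  let v : Fin (finrank Fq C) → ι → K := fun j i => algebraMap Fq K ((b j : ι → Fq) i)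
  have hspan : extendCode Fq K C = Submodule.span K (Set.range v) := by
    refine le_antisymm (Submodule.span_le.2 ?_) <| Submodule.span_le.2 <|
      Set.range_subset_iff.2 fun j => Submodule.subset_span ⟨b j, (b j).2, rfl⟩
    rintro _ ⟨c, hc, rfl⟩
    obtain ⟨r, rfl⟩ : ∃ r : Fin (finrank Fq C) → Fq, ∑ j, r j • (b j : ι → Fq) = c := by
      refine ⟨b.repr ⟨c, hc⟩, ?_⟩
      have := congr_arg Subtype.val (b.sum_repr ⟨c, hc⟩)
      push_cast at this
      exact this
    have hv : (fun i => algebraMap Fq K ((∑ j, r j • (b j : ι → Fq)) i)) = ∑ j, r j • v j := by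
      ext i
      simp [v, Algebra.smul_def]
    simp only [SetLike.mem_coe, hv]
    exact sum_mem fun j _ => Submodule.smul_of_tower_mem _ _ (Submodule.subset_span ⟨j, rfl⟩)
  have hind : LinearIndependent K v :=
    linearIndependent_algebraMap_comp_iff.2 (b.linearIndependent.map' C.subtype C.ker_subtype)
  rw [hspan, finrank_span_eq_card hind, Fintype.card_fin]

theorem comp_mem_dualCode_of_mem_dualCode_extendCode {C : Submodule Fq (ι → Fq)} {y : ι → K}
    (hy : y ∈ dualCode (extendCode Fq K C)) (φ : Module.Dual Fq K) :
    (fun i => φ (y i)) ∈ dualCode C := fun c hc => by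
  have h := hy (fun i => algebraMap Fq K (c i)) (Submodule.subset_span ⟨c, hc, rfl⟩)
  calc ∑ i, φ (y i) * c i = ∑ i, φ (c i • y i) :=
        sum_congr rfl fun i _ => by rw [map_smul, smul_eq_mul, mul_comm]
    _ = φ (∑ i, y i * algebraMap Fq K (c i)) := by
        simp_rw [map_sum, Algebra.smul_def, mul_comm (algebraMap Fq K _)]
    _ = 0 := by rw [h, map_zero]

theorem le_wt_of_mem_dualCode_extendCode {C : Submodule Fq (ι → Fq)} {d : ℕ}
    (hd : ∀ v ∈ dualCode C, v ≠ 0 → d ≤ wt v) {y : ι → K}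
    (hy : y ∈ dualCode (extendCode Fq K C)) (hy0 : y ≠ 0) : d ≤ wt y := by
  obtain ⟨i, hi⟩ := Function.ne_iff.1 hy0
  obtain ⟨φ, hφ⟩ := Module.Projective.exists_dual_ne_zero Fq hi
  calc d ≤ wt fun i => φ (y i) :=
        hd _ (comp_mem_dualCode_of_mem_dualCode_extendCode hy φ) fun h => hφ (congr_fun h i)
    _ ≤ wt y := wt_comp_le φ (map_zero φ) y

end ExtendCode

theorem nmds_even_ecp_case_D2_general {Fq K : Type*} [Field Fq] [Field K] [Algebra Fq K]
    {n ℓ : ℕ} (hl : 2 ≤ ℓ) (hn : 2 * ℓ < n - 4)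
    (C : Submodule Fq (Fin n → Fq))
    (hCk : Module.finrank Fq C = n - 2 * ℓ - 2)
    (hCd : hasMinDist C (2 * ℓ + 2))
    (hCdual : hasMinDist (dualCode C) (n - 2 * ℓ - 2))
    (A B : Submodule K (Fin n → K))
    (hAB : schurProd A B ≤ dualCode (extendCode Fq K C))
    (hBperp : ∃ dB, hasMinDist (dualCode B) dB ∧ ℓ < dB)
    (hAk : Module.finrank K A = ℓ + 2)
    (hAd : hasMinDist A (n - ℓ - 1)) :
    (Module.finrank K (dualCode B) = n - ℓ - 1 ∧ hasMinDist (dualCode B) (ℓ + 1)) ∨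
    (Module.finrank K (dualCode B) = n - ℓ ∧ hasMinDist (dualCode B) (ℓ + 1) ∧
      Module.finrank K (schurProd A B) = 2 * ℓ + 1 ∧
      hasMinDist (schurProd A B) (n - 2 * ℓ)) ∨
    (Module.finrank K (dualCode B) = n - ℓ ∧ hasMinDist (dualCode B) (ℓ + 1) ∧
      schurProd A B = dualCode (extendCode Fq K C)) := by
  have hcard : Fintype.card (Fin n) = n := Fintype.card_fin n
  have hDrank : finrank K (dualCode (extendCode Fq K C)) = 2 * ℓ + 2 := by
    have := finrank_dualCode_add (extendCode Fq K C)
    rw [finrank_extendCode] at this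
    omega
  have hAzero : RealizesZeroSets A (ℓ + 1) :=
    realizesZeroSets_of_finrank_eq hAk fun a ha ha0 => by have := hAd.2 a ha ha0; omega
  obtain ⟨dB, hBd, hdB⟩ := hBperp
  have hBstr : HasStrength B ℓ :=
    hasStrength_of_lt_wt_dualCode fun y hy hy0 => hdB.trans_le (hBd.2 y hy hy0)
  obtain ⟨u, hu, huwt⟩ : ∃ u ∈ extendCode Fq K C, wt u = 2 * ℓ + 2 := by
    obtain ⟨u, hu, -, huwt⟩ := hCd.1
    exact ⟨_, Submodule.subset_span ⟨u, hu, rfl⟩,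
      (wt_comp (algebraMap Fq K).injective (map_zero _) u).trans huwt⟩
  have hBrank : finrank K B = ℓ := by
    have := finrank_le_wt_sub_of_schurProd_le_dualCode (hAzero.hasStrength (by omega))
      (by omega) hAB (fun x => le_wt_of_mem_dualCode_extendCode hCdual.2) (by omega) hu
      (by omega)
    have := hBstr.le_finrank (by omega)
    omega
  have hBdual : finrank K (dualCode B) = n - ℓ := by
    have := finrank_dualCode_add B
    omega
  obtain rfl : dB = ℓ + 1 := by
    have := singleton_bound (W := univ) (fun _ _ i hi => absurd (mem_univ i) hi) hBd.2 (by omega)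
    rw [card_univ] at this
    omega
  have hPzero : RealizesZeroSets (schurProd A B) (2 * ℓ) :=
    (show ℓ + 1 + (ℓ - 1) = 2 * ℓ by omega) ▸
      hAzero.schurProd ((hBstr.mono (by omega)).realizesZeroSets (by omega))
  rcases hPzero.finrank_eq_and_hasMinDist_or_eq (by omega) hAB hDrank with ⟨hPrank, hPd⟩ | hPD
  · exact Or.inr (Or.inl ⟨hBdual, hBd, hPrank, by rwa [hcard] at hPd⟩)
  · exact Or.inr (Or.inr ⟨hBdual, hBd, hPD⟩)

/-- for an NMDS code `[n, n-2ℓ-2, 2ℓ+2]` with an `ℓ`-error-correcting pair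
`(A, B)` where `A = [n, ℓ+2, n-ℓ-1]`, the parameters of `B^⊥` and `A*B` fall into
one of three cases. -/
theorem nmds_even_ecp_case_D2 {Fq K : Type*} [Field Fq] [Fintype Fq] [Field K] [Algebra Fq K]
    {n ℓ : ℕ} (hl : 2 ≤ ℓ) (hn : 2 * ℓ < n - 4)
    (C : Submodule Fq (Fin n → Fq))
    (hCk : Module.finrank Fq C = n - 2 * ℓ - 2)
    (hCd : hasMinDist C (2 * ℓ + 2))
    (hCdual : hasMinDist (dualCode C) (n - 2 * ℓ - 2))
    (A B : Submodule K (Fin n → K))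
    (hAB : schurProd A B ≤ dualCode (extendCode Fq K C))
    (hBperp : ∃ dB, hasMinDist (dualCode B) dB ∧ ℓ < dB)
    (hAk : Module.finrank K A = ℓ + 2)
    (hAd : hasMinDist A (n - ℓ - 1))
    (hEd : n < (n - ℓ - 1) + (2 * ℓ + 2)) :
    (Module.finrank K (dualCode B) = n - ℓ - 1 ∧ hasMinDist (dualCode B) (ℓ + 1)) ∨
    (Module.finrank K (dualCode B) = n - ℓ ∧ hasMinDist (dualCode B) (ℓ + 1) ∧
      Module.finrank K (schurProd A B) = 2 * ℓ + 1 ∧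
      hasMinDist (schurProd A B) (n - 2 * ℓ)) ∨
    (Module.finrank K (dualCode B) = n - ℓ ∧ hasMinDist (dualCode B) (ℓ + 1) ∧
      schurProd A B = dualCode (extendCode Fq K C)) :=
  nmds_even_ecp_case_D2_general hl hn C hCk hCd hCdual A B hAB hBperp hAk hAd
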